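/- arXiv:2603.29080 — 6 statements merged into one kernel-verified Lean document; each statement's English description precedes it below -/
import Mathlib

section
/- Let w, y, g be vectors in EuclideanSpace ℝ (Fin d) with ⟪w, y⟫ > 0, ⟪w, g⟫ = 0, y + g ≠ 0 and ‖y + g‖ < ‖y‖. Then the probability (under P) that a noise vector η satisfies ⟪w + η, y + g⟫ > 0 is strictly greater than the probability that ⟪w + η, y⟫ > 0. That is, translating the query y by the orthogonal vector g, which strictly decreases its norm, strictly increases the probability that the sign of its inner product with the noisy direction w + η is preserved. -/
/-!
Under `P` the functional `η ↦ ⟪η, z⟫` is distributed as `N(0, s² ‖z‖²)`, so the event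
`⟪w + η, z⟫ > 0` has probability `N(0, s² ‖z‖²)(-⟪w, z⟫, ∞)`. Translating `y` by `g ⟂ w` keeps the
threshold `-⟪w, y⟫ < 0` and strictly lowers the variance; rescaling to the standard normal, a
smaller variance moves the threshold further left, which strictly increases the probability.
-/

open MeasureTheory ProbabilityTheory RealInnerProductSpace
open scoped NNReal

lemma stdGaussian_map_inner {E : Type*} [NormedAddCommGroup E] [InnerProductSpace ℝ E]
    [FiniteDimensional ℝ E] [MeasurableSpace E] [BorelSpace E] (z : E) :
    (stdGaussian E).map (fun x ↦ ⟪z, x⟫) = gaussianReal 0 (‖z‖₊ ^ 2) := by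
  rw [show (fun x ↦ ⟪z, x⟫) = ⇑(innerSL ℝ z) from rfl, IsGaussian.map_eq_gaussianReal,
    integral_strongDual_stdGaussian, variance_dual_stdGaussian, innerSL_apply_norm]
  congr
  ext
  simp

section Pi

variable {ι : Type*} [Fintype ι]

lemma pi_gaussianReal_eq_map_smul (c : ℝ) :
    Measure.pi (fun _ : ι ↦ gaussianReal 0 (.mk (c ^ 2) (sq_nonneg c))) =
      (Measure.pi fun _ : ι ↦ gaussianReal 0 1).map (c • ·) := by
  rw [show (c • · : (ι → ℝ) → ι → ℝ) = fun x i ↦ c * x i from rfl,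
    Measure.pi_map_pi fun _ ↦ (measurable_const_mul c).aemeasurable]
  simp [gaussianReal_map_const_mul]

lemma pi_gaussianReal_map_inner (v : ℝ≥0) (z : EuclideanSpace ℝ ι) :
    (Measure.pi fun _ : ι ↦ gaussianReal 0 v).map (fun η ↦ ⟪WithLp.toLp 2 η, z⟫) =
      gaussianReal 0 (‖z‖₊ ^ 2 * v) := by
  have hv : v = .mk ((v : ℝ).sqrt ^ 2) (sq_nonneg _) := by ext; simp
  have hcomp : (fun η : ι → ℝ ↦ ⟪WithLp.toLp 2 η, z⟫) ∘ ((v : ℝ).sqrt • ·) =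
      (fun x ↦ ⟪(v : ℝ).sqrt • z, x⟫) ∘ WithLp.toLp 2 := by
    ext η
    simp [inner_smul_left, inner_smul_right, real_inner_comm]
  rw [hv, pi_gaussianReal_eq_map_smul, Measure.map_map (by fun_prop) (by fun_prop), hcomp,
    ← Measure.map_map (by fun_prop) (by fun_prop), map_pi_eq_stdGaussian, stdGaussian_map_inner]
  congr 1
  ext
  simp [norm_smul, mul_pow, mul_comm]

lemma pi_gaussianReal_inner_add_pos (v : ℝ≥0) (w z : EuclideanSpace ℝ ι) :
    (Measure.pi fun _ : ι ↦ gaussianReal 0 v)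
        {η | 0 < ⟪w + (EuclideanSpace.equiv ι ℝ).symm η, z⟫} =
      gaussianReal 0 (‖z‖₊ ^ 2 * v) (Set.Ioi (-⟪w, z⟫)) := by
  rw [← pi_gaussianReal_map_inner, Measure.map_apply (by fun_prop) measurableSet_Ioi]
  congr 1
  ext η
  simp [inner_add_left, real_inner_comm, neg_lt_iff_pos_add']

end Pi

lemma gaussianReal_Ioi_strictAnti (μ : ℝ) {v : ℝ≥0} (hv : v ≠ 0) :
    StrictAnti fun t ↦ gaussianReal μ v (Set.Ioi t) := by
  intro t₁ t₂ ht
  have hIoc : gaussianReal μ v (Set.Ioc t₁ t₂) ≠ 0 := fun h ↦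
    ht.not_ge (by simpa using gaussianReal_absolutelyContinuous' μ hv h)
  dsimp only
  rw [← Set.Ioc_union_Ioi_eq_Ioi ht.le, measure_union Set.Ioc_disjoint_Ioi_same measurableSet_Ioi,
    add_comm]
  exact ENNReal.lt_add_right (measure_ne_top _ _) hIoc

lemma gaussianReal_Ioi_neg_eq_std (a : ℝ) {v : ℝ≥0} (hv : v ≠ 0) :
    gaussianReal 0 v (Set.Ioi (-a)) = gaussianReal 0 1 (Set.Ioi (-(a / (v : ℝ).sqrt))) := by
  have hsqrt : 0 < (v : ℝ).sqrt := by positivity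
  have hv' : v = .mk ((v : ℝ).sqrt ^ 2) (sq_nonneg _) * 1 := by ext; simp
  nth_rw 1 [hv']
  rw [← mul_zero (v : ℝ).sqrt, ← gaussianReal_map_const_mul,
    Measure.map_apply (measurable_const_mul _) measurableSet_Ioi, mul_zero]
  congr 1
  ext x
  rw [Set.mem_preimage, Set.mem_Ioi, Set.mem_Ioi, ← neg_div, div_lt_iff₀ hsqrt, mul_comm]

lemma gaussianReal_Ioi_neg_lt_of_lt {a : ℝ} (ha : 0 < a) {v₁ v₂ : ℝ≥0} (hv₂ : v₂ ≠ 0)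
    (h : v₂ < v₁) : gaussianReal 0 v₁ (Set.Ioi (-a)) < gaussianReal 0 v₂ (Set.Ioi (-a)) := by
  rw [gaussianReal_Ioi_neg_eq_std a hv₂, gaussianReal_Ioi_neg_eq_std a (hv₂.bot_lt.trans h).ne']
  refine gaussianReal_Ioi_strictAnti 0 one_ne_zero (neg_lt_neg ?_)
  gcongr

theorem gap_translation_increases_robustness_general
    (d : ℕ) (s : ℝ≥0) (hs : 0 < s)
    (P : Measure (Fin d → ℝ))
    (hP : P = Measure.pi fun _ : Fin d => gaussianReal 0 (s ^ 2))
    (w y g : EuclideanSpace ℝ (Fin d))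
    (hwy : 0 < ⟪w, y⟫) (hwg : ⟪w, g⟫ = 0)
    (hnorm : ‖y + g‖ < ‖y‖) :
    P {η : Fin d → ℝ | 0 < ⟪w + (EuclideanSpace.equiv (Fin d) ℝ).symm η, y⟫}
      < P {η : Fin d → ℝ | 0 < ⟪w + (EuclideanSpace.equiv (Fin d) ℝ).symm η, y + g⟫} := by
  subst hP
  have hwyg : ⟪w, y + g⟫ = ⟪w, y⟫ := by rw [inner_add_right, hwg, add_zero]
  have hyg : y + g ≠ 0 := fun h ↦ by rw [h, inner_zero_right] at hwyg; linarith
  rw [pi_gaussianReal_inner_add_pos, pi_gaussianReal_inner_add_pos, hwyg]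
  refine gaussianReal_Ioi_neg_lt_of_lt hwy
    (mul_ne_zero (pow_ne_zero 2 (nnnorm_ne_zero_iff.2 hyg)) (pow_ne_zero 2 hs.ne')) ?_
  gcongr
  exact hnorm

theorem gap_translation_increases_robustness
    (d : ℕ) (hd : 0 < d) (s : ℝ≥0) (hs : 0 < s)
    (P : Measure (Fin d → ℝ))
    (hP : P = Measure.pi fun _ : Fin d => gaussianReal 0 (s ^ 2))
    (w y g : EuclideanSpace ℝ (Fin d))
    (hwy : 0 < ⟪w, y⟫) (hwg : ⟪w, g⟫ = 0)
    (hyg : y + g ≠ 0) (hnorm : ‖y + g‖ < ‖y‖) :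
    P {η : Fin d → ℝ | 0 < ⟪w + (EuclideanSpace.equiv (Fin d) ℝ).symm η, y⟫}
      < P {η : Fin d → ℝ | 0 < ⟪w + (EuclideanSpace.equiv (Fin d) ℝ).symm η, y + g⟫} :=
  gap_translation_increases_robustness_general d s hs P hP w y g hwy hwg hnorm
end

section
/- Suppose there exist a vector v and real numbers a, b such that ⟪v, x_k⟫ = a and ⟪v, y_k⟫ = b for all k = 1,…,N, and suppose the matrices Q^x and Q^y are doubly stochastic, i.e. Σ_{k=1}^N Q^x(k,i) = 1 for every i and Σ_{k=1}^N Q^y(i,k) = 1 for every i (the remaining row/column sums equal 1 by construction). Then for any step size η ∈ ℝ, the gradient-descent update x_k' = x_k − η·∇_{x_k}L and y_k' = y_k − η·∇_{y_k}L satisfies ⟪v, x_k'⟫ = a and ⟪v, y_k'⟫ = b for all k; i.e. a gradient step on the contrastive loss leaves the projections of both modalities onto v unchanged. -/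
/-!
Write `S_ij = -‖x_i - y_j‖² / τ` for the logits, so that `Q^x` and `Q^y` are the row and column
softmaxes of `S`. As a function of `S`, the loss has partial derivatives
`∂L/∂S_ij = -(2 δ_ij - Q^x_ij - Q^y_ij) / N`. Moving `x_k` along `v` changes row `k` of `S` at the
common rate `-2 ⟪v, x_k - y_j⟫ / τ`, which does not depend on `j` because `⟪v, y_j⟫ = b`, and
leaves the other rows fixed; so `⟪v, ∇_{x_k} L⟫` is proportional to
`2 - Σ_j Q^x_kj - Σ_j Q^y_kj = 1 - Σ_j Q^y_kj = 0`. The `y` case is the same computation after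
the symmetry `L(x, y) = L(y, x)`, which exchanges `Q^x` and `Q^y`.
-/

open RealInnerProductSpace

/-- Softmax assignment matrix `Q^x(i,j)` (rows sum to one). -/
noncomputable def Qx {d N : ℕ} (τ : ℝ) (x y : Fin N → EuclideanSpace ℝ (Fin d))
    (i j : Fin N) : ℝ :=
  Real.exp (-‖x i - y j‖ ^ 2 / τ) / ∑ j', Real.exp (-‖x i - y j'‖ ^ 2 / τ)

/-- Softmax assignment matrix `Q^y(i,j)` (columns sum to one). -/
noncomputable def Qy {d N : ℕ} (τ : ℝ) (x y : Fin N → EuclideanSpace ℝ (Fin d))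
    (i j : Fin N) : ℝ :=
  Real.exp (-‖x i - y j‖ ^ 2 / τ) / ∑ i', Real.exp (-‖x i' - y j‖ ^ 2 / τ)

/-- The multimodal contrastive loss
`L = −(1/N) Σ_i (log Q^x(i,i) + log Q^y(i,i))`. -/
noncomputable def contrastiveLoss {d N : ℕ} (τ : ℝ)
    (x y : Fin N → EuclideanSpace ℝ (Fin d)) : ℝ :=
  -(1 / (N : ℝ)) * ∑ i, (Real.log (Qx τ x y i i) + Real.log (Qy τ x y i i))

open Finset Function Real

section Softmax

variable {ι : Type*} [Fintype ι]

noncomputable def rowSoftmax (S : ι → ι → ℝ) (i j : ι) : ℝ :=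
  exp (S i j) / ∑ j', exp (S i j')

noncomputable def colSoftmax (S : ι → ι → ℝ) (i j : ι) : ℝ :=
  exp (S i j) / ∑ i', exp (S i' j)

noncomputable def logitLoss (S : ι → ι → ℝ) : ℝ :=
  -(1 / (Fintype.card ι : ℝ)) * ∑ i, (log (rowSoftmax S i i) + log (colSoftmax S i i))

lemma sum_exp_pos [Nonempty ι] (f : ι → ℝ) : 0 < ∑ i, exp (f i) :=
  Finset.sum_pos (fun i _ => exp_pos (f i)) univ_nonempty

lemma log_exp_div_sum_exp (f : ι → ℝ) (i : ι) :
    log (exp (f i) / ∑ j, exp (f j)) = f i - log (∑ j, exp (f j)) := by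
  have : Nonempty ι := ⟨i⟩
  rw [log_div (exp_ne_zero _) (sum_exp_pos f).ne', log_exp]

lemma sum_rowSoftmax (S : ι → ι → ℝ) (i : ι) : ∑ j, rowSoftmax S i j = 1 := by
  have : Nonempty ι := ⟨i⟩
  simp only [rowSoftmax]
  rw [← Finset.sum_div, div_self (sum_exp_pos _).ne']

lemma HasDerivAt.log_sum_exp [Nonempty ι] {f : ℝ → ι → ℝ} {f' : ι → ℝ} {t : ℝ}
    (hf : ∀ j, HasDerivAt (fun t => f t j) (f' j) t) :
    HasDerivAt (fun t => Real.log (∑ j, Real.exp (f t j)))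
      (∑ j, Real.exp (f t j) / (∑ j', Real.exp (f t j')) * f' j) t := by
  refine ((HasDerivAt.fun_sum fun j _ => (hf j).exp).log (sum_exp_pos _).ne').congr_deriv ?_
  rw [div_eq_inv_mul, Finset.mul_sum]
  exact Finset.sum_congr rfl fun j _ => by ring

lemma hasDerivAt_logitLoss {S : ℝ → ι → ι → ℝ} {S' : ι → ι → ℝ} {t : ℝ}
    (hS : ∀ i j, HasDerivAt (fun t => S t i j) (S' i j) t) :
    HasDerivAt (fun t => logitLoss (S t))
      (-(1 / (Fintype.card ι : ℝ)) * ∑ i, (2 * S' i i - ∑ j, rowSoftmax (S t) i j * S' i j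
        - ∑ j, colSoftmax (S t) j i * S' j i)) t := by
  have hloss : ∀ t, logitLoss (S t) = -(1 / (Fintype.card ι : ℝ)) * ∑ i, (2 * S t i i
      - log (∑ j, exp (S t i j)) - log (∑ j, exp (S t j i))) := fun t => by
    simp only [logitLoss, rowSoftmax, colSoftmax]
    congr 1
    refine Finset.sum_congr rfl fun i _ => ?_
    rw [log_exp_div_sum_exp (S t i), log_exp_div_sum_exp (S t · i)]
    ring
  simp only [hloss]
  refine HasDerivAt.const_mul _ (HasDerivAt.fun_sum fun i _ => ?_)
  have : Nonempty ι := ⟨i⟩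
  exact (((hS i i).const_mul 2).sub (HasDerivAt.log_sum_exp (hS i))).sub
    (HasDerivAt.log_sum_exp fun j => hS j i)

lemma hasDerivAt_logitLoss_of_rowShift [DecidableEq ι] {S : ℝ → ι → ι → ℝ} {t δ : ℝ} (k : ι)
    (hS : ∀ i j, HasDerivAt (fun t => S t i j) (if i = k then δ else 0) t) :
    HasDerivAt (fun t => logitLoss (S t))
      (-(δ / (Fintype.card ι : ℝ)) * (1 - ∑ j, colSoftmax (S t) k j)) t := by
  convert hasDerivAt_logitLoss hS using 1
  simp only [mul_ite, mul_zero, Finset.sum_sub_distrib, Finset.sum_ite_irrel,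
    Finset.sum_const_zero, Finset.sum_ite_eq', Finset.mem_univ, if_true, ← Finset.sum_mul,
    sum_rowSoftmax]
  ring

end Softmax

noncomputable def logits {E : Type*} [NormedAddCommGroup E] {ι : Type*} (τ : ℝ) (x y : ι → E)
    (i j : ι) : ℝ :=
  -‖x i - y j‖ ^ 2 / τ

lemma inner_gradient_eq_zero_of_hasLineDerivAt {F : Type*} [NormedAddCommGroup F]
    [InnerProductSpace ℝ F] [CompleteSpace F] {f : F → ℝ} {p v : F}
    (hf : HasLineDerivAt ℝ f 0 p v) : ⟪v, gradient f p⟫ = 0 := by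
  rw [inner_gradient_right, conj_trivial]
  -- Mathlib's gradient is `0` where `f` is not differentiable.
  by_cases hdiff : DifferentiableAt ℝ f p
  · rw [← hdiff.lineDeriv_eq_fderiv, hf.lineDeriv]
  · rw [fderiv_zero_of_not_differentiableAt hdiff, zero_apply]

lemma hasDerivAt_logits_update_line {E : Type*} [NormedAddCommGroup E] [InnerProductSpace ℝ E]
    {ι : Type*} [DecidableEq ι] (τ : ℝ) (x y : ι → E) (k : ι) (v : E) {b : ℝ}
    (hvb : ∀ j, ⟪v, y j⟫ = b) (i j : ι) :
    HasDerivAt (fun t : ℝ => logits τ (update x k (x k + t • v)) y i j)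
      (if i = k then -2 * (⟪v, x k⟫ - b) / τ else 0) 0 := by
  by_cases hik : i = k
  · subst hik
    simp only [logits, update_self, if_true]
    refine ((((hasDerivAt_id (0 : ℝ)).smul_const v).const_add (x i)).sub_const
      (y j)).norm_sq.neg.div_const τ |>.congr_deriv ?_
    rw [id, zero_smul, add_zero, one_smul, inner_sub_left, real_inner_comm v (x i),
      real_inner_comm v (y j), hvb]
    ring
  · simp only [logits, update_of_ne hik, if_neg hik]
    exact hasDerivAt_const _ _

section Contrastive

variable {d N : ℕ} {τ : ℝ} {x y : Fin N → EuclideanSpace ℝ (Fin d)}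

lemma Qy_eq_colSoftmax : Qy τ x y = colSoftmax (logits τ x y) := rfl

lemma contrastiveLoss_eq_logitLoss : contrastiveLoss τ x y = logitLoss (logits τ x y) := by
  rw [contrastiveLoss, logitLoss, Fintype.card_fin]
  rfl

lemma Qy_swap (i j : Fin N) : Qy τ y x i j = Qx τ x y j i := by
  simp only [Qx, Qy, norm_sub_rev (y _)]

lemma contrastiveLoss_comm : contrastiveLoss τ x y = contrastiveLoss τ y x := by
  simp only [contrastiveLoss, Qy_swap, add_comm]

lemma inner_gradient_contrastiveLoss_update_left (k : Fin N) {v : EuclideanSpace ℝ (Fin d)}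
    {b : ℝ} (hvb : ∀ j, ⟪v, y j⟫ = b) (hQy : ∑ j, Qy τ x y k j = 1) :
    ⟪v, gradient (fun z => contrastiveLoss τ (update x k z) y) (x k)⟫ = 0 := by
  refine inner_gradient_eq_zero_of_hasLineDerivAt ?_
  have h := hasDerivAt_logitLoss_of_rowShift k (hasDerivAt_logits_update_line τ x y k v hvb)
  simp only [HasLineDerivAt, contrastiveLoss_eq_logitLoss]
  refine h.congr_deriv ?_
  rw [zero_smul, add_zero, update_eq_self, ← Qy_eq_colSoftmax, hQy, sub_self, mul_zero]

lemma inner_gradient_contrastiveLoss_update_right (k : Fin N) {v : EuclideanSpace ℝ (Fin d)}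
    {a : ℝ} (hva : ∀ j, ⟪v, x j⟫ = a) (hQx : ∑ j, Qx τ x y j k = 1) :
    ⟪v, gradient (fun z => contrastiveLoss τ x (update y k z)) (y k)⟫ = 0 := by
  simp only [contrastiveLoss_comm (x := x)]
  exact inner_gradient_contrastiveLoss_update_left k hva (by simpa only [Qy_swap] using hQx)

end Contrastive

theorem gradient_step_preserves_projection_general
    (d N : ℕ) (τ : ℝ)
    (x y : Fin N → EuclideanSpace ℝ (Fin d))
    (v : EuclideanSpace ℝ (Fin d)) (a b : ℝ)
    (hva : ∀ k, ⟪v, x k⟫ = a) (hvb : ∀ k, ⟪v, y k⟫ = b)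
    (hQx : ∀ i, ∑ k, Qx τ x y k i = 1)
    (hQy : ∀ i, ∑ k, Qy τ x y i k = 1)
    (η : ℝ) (x' y' : Fin N → EuclideanSpace ℝ (Fin d))
    (hx' : ∀ k, x' k =
      x k - η • gradient (fun z => contrastiveLoss τ (Function.update x k z) y) (x k))
    (hy' : ∀ k, y' k =
      y k - η • gradient (fun z => contrastiveLoss τ x (Function.update y k z)) (y k)) :
    (∀ k, ⟪v, x' k⟫ = a) ∧ (∀ k, ⟪v, y' k⟫ = b) := by
  refine ⟨fun k => ?_, fun k => ?_⟩
  · rw [hx' k, inner_sub_right, inner_smul_right,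
      inner_gradient_contrastiveLoss_update_left k hvb (hQy k), mul_zero, sub_zero, hva k]
  · rw [hy' k, inner_sub_right, inner_smul_right,
      inner_gradient_contrastiveLoss_update_right k hva (hQx k), mul_zero, sub_zero, hvb k]

theorem gradient_step_preserves_projection
    (d N : ℕ) (hd : 0 < d) (hN : 0 < N) (τ : ℝ) (hτ : 0 < τ)
    (x y : Fin N → EuclideanSpace ℝ (Fin d))
    (v : EuclideanSpace ℝ (Fin d)) (a b : ℝ)
    (hva : ∀ k, ⟪v, x k⟫ = a) (hvb : ∀ k, ⟪v, y k⟫ = b)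
    (hQx : ∀ i, ∑ k, Qx τ x y k i = 1)
    (hQy : ∀ i, ∑ k, Qy τ x y i k = 1)
    (η : ℝ) (x' y' : Fin N → EuclideanSpace ℝ (Fin d))
    (hx' : ∀ k, x' k =
      x k - η • gradient (fun z => contrastiveLoss τ (Function.update x k z) y) (x k))
    (hy' : ∀ k, y' k =
      y k - η • gradient (fun z => contrastiveLoss τ x (Function.update y k z)) (y k)) :
    (∀ k, ⟪v, x' k⟫ = a) ∧ (∀ k, ⟪v, y' k⟫ = b) :=
  gradient_step_preserves_projection_general d N τ x y v a b hva hvb hQx hQy η x' y' hx' hy'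
end

section
/- For every i, the function y_i ↦ L (with all x_k and all y_k for k ≠ i held fixed) is differentiable, and its gradient equals ∇_{y_i}L = −(2/(N·τ)) · [ 2(x_i − y_i) − Σ_{k=1}^N (Q^x(k,i) + Q^y(k,i))·(x_k − y_i) ], where Q^x, Q^y are evaluated at the current points. -/
open RealInnerProductSpace

/-!
Write `s k j = -‖x k - y j‖ ^ 2 / τ` for the logits. Then `log Qx k k = s k k - log ∑ j, exp (s k j)`
is a log-softmax, whose gradient is `∇ s k k - ∑ j, Qx k j • ∇ s k j`, and likewise for `log Qy k k`
with the column `j ↦ s j k`. Only the logits `s k i` of column `i` depend on `y i`, each with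
gradient `(2 / τ) • (x k - y i)`, so summing over `k` leaves `2 (x i - y i)` from the diagonal terms
and `-∑ k, (Qx k i + Qy k i) • (x k - y i)` from the softmax terms.
-/

namespace HasGradientAt

variable {E : Type*} [NormedAddCommGroup E] [InnerProductSpace ℝ E] [CompleteSpace E]
  {f g : E → ℝ} {f' g' x : E}

theorem _root_.HasDerivAt.comp_hasGradientAt {h : ℝ → ℝ} {h' : ℝ} (hh : HasDerivAt h h' (f x))
    (hf : HasGradientAt f f' x) : HasGradientAt (fun z => h (f z)) (h' • f') x := by
  rw [hasGradientAt_iff_hasFDerivAt] at hf ⊢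
  simpa [Function.comp_def] using hh.comp_hasFDerivAt x hf

theorem add (hf : HasGradientAt f f' x) (hg : HasGradientAt g g' x) :
    HasGradientAt (fun z => f z + g z) (f' + g') x := by
  rw [hasGradientAt_iff_hasFDerivAt] at hf hg ⊢
  rw [map_add]
  exact hf.fun_add hg

theorem sub (hf : HasGradientAt f f' x) (hg : HasGradientAt g g' x) :
    HasGradientAt (fun z => f z - g z) (f' - g') x := by
  rw [hasGradientAt_iff_hasFDerivAt] at hf hg ⊢
  rw [map_sub]
  exact hf.fun_sub hg

theorem const_mul (c : ℝ) (hf : HasGradientAt f f' x) :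
    HasGradientAt (fun z => c * f z) (c • f') x := by
  simpa using ((hasDerivAt_id (f x)).const_mul c).comp_hasGradientAt hf

theorem sum {ι : Type*} {s : Finset ι} {f : ι → E → ℝ} {f' : ι → E}
    (hf : ∀ k ∈ s, HasGradientAt (f k) (f' k) x) :
    HasGradientAt (fun z => ∑ k ∈ s, f k z) (∑ k ∈ s, f' k) x := by
  simp only [hasGradientAt_iff_hasFDerivAt, map_sum] at hf ⊢
  exact HasFDerivAt.fun_sum hf

theorem exp (hf : HasGradientAt f f' x) :
    HasGradientAt (fun z => Real.exp (f z)) (Real.exp (f x) • f') x :=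
  (Real.hasDerivAt_exp (f x)).comp_hasGradientAt hf

theorem log (hf : HasGradientAt f f' x) (hx : f x ≠ 0) :
    HasGradientAt (fun z => Real.log (f z)) ((f x)⁻¹ • f') x :=
  (Real.hasDerivAt_log hx).comp_hasGradientAt hf

theorem log_exp_div_sum_exp {ι : Type*} [Fintype ι] {f : ι → E → ℝ} {f' : ι → E}
    (hf : ∀ j, HasGradientAt (f j) (f' j) x) (a : ι) :
    HasGradientAt (fun z => Real.log (Real.exp (f a z) / ∑ j, Real.exp (f j z)))
      (f' a - ∑ j, (Real.exp (f j x) / ∑ j', Real.exp (f j' x)) • f' j) x := by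
  have hpos : ∀ z, 0 < ∑ j, Real.exp (f j z) := fun z =>
    Finset.sum_pos (fun j _ => Real.exp_pos _) ⟨a, Finset.mem_univ a⟩
  have hlse := (sum fun j _ => (hf j).exp).log (hpos x).ne'
  convert (hf a).sub hlse using 1
  · ext z
    rw [Real.log_div (Real.exp_pos _).ne' (hpos z).ne', Real.log_exp]
  · simp only [Finset.smul_sum, smul_smul, div_eq_inv_mul]

end HasGradientAt

section

variable {E : Type*} [NormedAddCommGroup E] [InnerProductSpace ℝ E] [CompleteSpace E]

theorem hasGradientAt_norm_sub_sq (c x : E) :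
    HasGradientAt (fun z => ‖c - z‖ ^ 2) ((2 : ℝ) • (x - c)) x := by
  simp only [norm_sub_rev c, hasGradientAt_iff_hasFDerivAt]
  refine ((hasFDerivAt_id x).sub_const c).norm_sq.congr_fderiv ?_
  ext v
  simp

theorem hasGradientAt_update_apply {ι : Type*} [DecidableEq ι] {g : E → ℝ} {g' : E}
    (y : ι → E) (i j : ι) (hg : HasGradientAt g g' (y i)) :
    HasGradientAt (fun z => g (Function.update y i z j)) (if j = i then g' else 0) (y i) := by
  rcases eq_or_ne j i with rfl | hj
  · simpa using hg
  · simp only [Function.update_of_ne hj, if_neg hj]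
    exact hasGradientAt_const (y i) (g (y j))

theorem hasGradientAt_neg_norm_sub_sq_div (τ : ℝ) (c x : E) :
    HasGradientAt (fun z => -‖c - z‖ ^ 2 / τ) ((2 / τ) • (c - x)) x := by
  convert ((hasGradientAt_norm_sub_sq c x).const_mul (-1 / τ)) using 1
  · ext z; ring
  · module

end

theorem gradient_of_contrastive_loss_general
    (d N : ℕ) (τ : ℝ)
    (x y : Fin N → EuclideanSpace ℝ (Fin d)) (i : Fin N) :
    HasGradientAt (fun z => contrastiveLoss τ x (Function.update y i z))
      ((-(2 / ((N : ℝ) * τ))) •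
        ((2 : ℝ) • (x i - y i) - ∑ k, (Qx τ x y k i + Qy τ x y k i) • (x k - y i)))
      (y i) := by
  have hlogit : ∀ k j, HasGradientAt (fun z => -‖x k - Function.update y i z j‖ ^ 2 / τ)
      (if j = i then (2 / τ) • (x k - y i) else 0) (y i) := fun k j =>
    hasGradientAt_update_apply y i j (hasGradientAt_neg_norm_sub_sq_div τ (x k) (y i))
  have hlogQx := fun k => HasGradientAt.log_exp_div_sum_exp (fun j => hlogit k j) k
  have hlogQy := fun k => HasGradientAt.log_exp_div_sum_exp (fun k' => hlogit k' k) k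
  convert (HasGradientAt.sum (s := Finset.univ) fun k _ =>
    (hlogQx k).add (hlogQy k)).const_mul (-(1 / (N : ℝ))) using 1
  · rfl
  simp only [Function.update_eq_self, smul_ite, smul_zero, Finset.sum_ite_irrel,
    Finset.sum_const_zero, Finset.sum_ite_eq', Finset.mem_univ, if_true, Finset.sum_add_distrib,
    Finset.sum_sub_distrib]
  change _ = -(1 / (N : ℝ)) • ((2 / τ) • (x i - y i) - ∑ k, Qx τ x y k i • (2 / τ) • (x k - y i)
    + ((2 / τ) • (x i - y i) - ∑ k, Qy τ x y k i • (2 / τ) • (x k - y i)))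
  simp only [smul_comm _ (2 / τ), ← Finset.smul_sum, add_smul, Finset.sum_add_distrib]
  module

theorem gradient_of_contrastive_loss
    (d N : ℕ) (hd : 0 < d) (hN : 0 < N) (τ : ℝ) (hτ : 0 < τ)
    (x y : Fin N → EuclideanSpace ℝ (Fin d)) (i : Fin N) :
    HasGradientAt (fun z => contrastiveLoss τ x (Function.update y i z))
      ((-(2 / ((N : ℝ) * τ))) •
        ((2 : ℝ) • (x i - y i) - ∑ k, (Qx τ x y k i + Qy τ x y k i) • (x k - y i)))
      (y i) :=
  gradient_of_contrastive_loss_general d N τ x y i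
end

section
/- Let w, y, g be vectors in EuclideanSpace ℝ (Fin d) and b ≥ 0 a real, with ⟪w, y⟫ > b, ⟪w, g⟫ = 0, y + g ≠ 0 and ‖y + g‖ < ‖y‖. Then the probability (under P) that a noise vector η satisfies ⟪w + η, y + g⟫ > b is strictly greater than the probability that ⟪w + η, y⟫ > b: the robustness conclusion extends to decision boundaries with nonzero offset b, provided the margin of y exceeds b. -/
/-!
Writing `η = s • ξ` with `ξ` standard Gaussian, the projection `⟪η, v⟫` is a centred real Gaussian
with standard deviation `s ‖v‖`, because a standard Gaussian pushed forward along a continuous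
linear functional is a centred Gaussian whose variance is the squared norm of the functional.
Since `⟪w, g⟫ = 0`, both events are half-lines `{⟪η, v⟫ > t}` with the same threshold
`t = b - ⟪w, y⟫ < 0`, and the probability `P(Z > t / (s ‖v‖))` of such a half-line with negative
threshold strictly decreases as `‖v‖` grows.
-/

open MeasureTheory ProbabilityTheory RealInnerProductSpace Set
open scoped NNReal

namespace ProbabilityTheory

lemma stdGaussian_map_strongDual {E : Type*} [NormedAddCommGroup E] [InnerProductSpace ℝ E]
    [FiniteDimensional ℝ E] [MeasurableSpace E] [BorelSpace E] (L : StrongDual ℝ E) :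
    (stdGaussian E).map L = gaussianReal 0 (‖L‖₊ ^ 2) := by
  rw [IsGaussian.eq_gaussianReal ((stdGaussian E).map L) inferInstance,
    integral_map L.continuous.aemeasurable (by fun_prop),
    variance_map aemeasurable_id L.continuous.aemeasurable]
  simp only [id, integral_strongDual_stdGaussian, Function.id_comp, variance_dual_stdGaussian]
  congr
  ext
  simp

lemma gaussianReal_zero_one_map_const_mul (σ : ℝ≥0) :
    (gaussianReal 0 1).map ((σ : ℝ) * ·) = gaussianReal 0 (σ ^ 2) := by
  rw [gaussianReal_map_const_mul]
  congr
  · simp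
  · ext; simp

section Pi

variable {ι : Type*} [Fintype ι]

lemma pi_gaussianReal_eq_map_const_mul (σ : ℝ≥0) :
    Measure.pi (fun _ : ι => gaussianReal 0 (σ ^ 2)) =
      (Measure.pi fun _ : ι => gaussianReal 0 1).map (fun x i => (σ : ℝ) * x i) := by
  rw [Measure.pi_map_pi (fun _ => by fun_prop)]
  simp only [gaussianReal_zero_one_map_const_mul]

lemma pi_gaussianReal_map_inner (σ : ℝ≥0) (v : EuclideanSpace ℝ ι) :
    (Measure.pi fun _ : ι => gaussianReal 0 (σ ^ 2)).map (fun η => ⟪WithLp.toLp 2 η, v⟫) =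
      gaussianReal 0 ((σ * ‖v‖₊) ^ 2) := by
  have hcomp : (fun η => ⟪WithLp.toLp 2 η, v⟫) ∘ (fun x i => (σ : ℝ) * x i) =
      innerSL ℝ ((σ : ℝ) • v) ∘ WithLp.toLp 2 := by
    ext x
    change ⟪WithLp.toLp 2 ((σ : ℝ) • x), v⟫ = ⟪(σ : ℝ) • v, WithLp.toLp 2 x⟫
    rw [WithLp.toLp_smul, real_inner_smul_left, real_inner_smul_left, real_inner_comm]
  rw [pi_gaussianReal_eq_map_const_mul, Measure.map_map (by fun_prop) (by fun_prop), hcomp,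
    ← Measure.map_map (by fun_prop) (by fun_prop), map_pi_eq_stdGaussian,
    stdGaussian_map_strongDual]
  congr
  ext
  simp [norm_smul]

lemma pi_gaussianReal_setOf_lt_inner (σ : ℝ≥0) (v : EuclideanSpace ℝ ι) (c : ℝ) :
    Measure.pi (fun _ : ι => gaussianReal 0 (σ ^ 2)) {η | c < ⟪WithLp.toLp 2 η, v⟫} =
      gaussianReal 0 ((σ * ‖v‖₊) ^ 2) (Ioi c) := by
  rw [← pi_gaussianReal_map_inner, Measure.map_apply (by fun_prop) measurableSet_Ioi]
  rfl

end Pi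

lemma gaussianReal_Ioi_strictAnti (μ : ℝ) {v : ℝ≥0} (hv : v ≠ 0) :
    StrictAnti fun a => gaussianReal μ v (Ioi a) := by
  intro a b hab
  have hIoc : gaussianReal μ v (Ioc a b) ≠ 0 := fun h0 => by
    have hvol := gaussianReal_absolutelyContinuous' μ hv h0
    simp only [Real.volume_Ioc, ENNReal.ofReal_eq_zero, tsub_le_iff_right, zero_add] at hvol
    exact hvol.not_gt hab
  calc gaussianReal μ v (Ioi b) < gaussianReal μ v (Ioi b) + gaussianReal μ v (Ioc a b) :=
        ENNReal.lt_add_right (measure_ne_top _ _) hIoc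
    _ = gaussianReal μ v (Ioi a) := by
        rw [add_comm, ← measure_union (Ioc_disjoint_Ioi le_rfl) measurableSet_Ioi,
          Ioc_union_Ioi_eq_Ioi hab.le]

lemma gaussianReal_sq_Ioi_eq_Ioi_div {σ : ℝ≥0} (hσ : 0 < σ) (t : ℝ) :
    gaussianReal 0 (σ ^ 2) (Ioi t) = gaussianReal 0 1 (Ioi (t / σ)) := by
  rw [← gaussianReal_zero_one_map_const_mul, Measure.map_apply (by fun_prop) measurableSet_Ioi]
  congr 1
  ext x
  rw [mem_preimage, mem_Ioi, mem_Ioi, div_lt_iff₀' (NNReal.coe_pos.2 hσ)]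

lemma gaussianReal_sq_Ioi_lt_of_lt_of_neg {t : ℝ} (ht : t < 0) {σ₁ σ₂ : ℝ≥0} (hσ₁ : 0 < σ₁)
    (h : σ₁ < σ₂) : gaussianReal 0 (σ₂ ^ 2) (Ioi t) < gaussianReal 0 (σ₁ ^ 2) (Ioi t) := by
  have hσ₂ : 0 < σ₂ := hσ₁.trans h
  rw [gaussianReal_sq_Ioi_eq_Ioi_div hσ₁, gaussianReal_sq_Ioi_eq_Ioi_div hσ₂]
  refine gaussianReal_Ioi_strictAnti 0 one_ne_zero ?_
  rw [div_lt_div_iff₀ (by exact_mod_cast hσ₁) (by exact_mod_cast hσ₂)]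
  exact mul_lt_mul_of_neg_left (by exact_mod_cast h) ht

end ProbabilityTheory

theorem gap_translation_increases_robustness_offset_general
    (d : ℕ) (s : ℝ≥0) (hs : 0 < s)
    (P : Measure (Fin d → ℝ))
    (hP : P = Measure.pi fun _ : Fin d => gaussianReal 0 (s ^ 2))
    (w y g : EuclideanSpace ℝ (Fin d)) (b : ℝ)
    (hwy : b < ⟪w, y⟫) (hwg : ⟪w, g⟫ = 0)
    (hyg : y + g ≠ 0) (hnorm : ‖y + g‖ < ‖y‖) :
    P {η : Fin d → ℝ | b < ⟪w + (EuclideanSpace.equiv (Fin d) ℝ).symm η, y⟫}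
      < P {η : Fin d → ℝ | b < ⟪w + (EuclideanSpace.equiv (Fin d) ℝ).symm η, y + g⟫} := by
  have hshift (v : EuclideanSpace ℝ (Fin d)) :
      {η : Fin d → ℝ | b < ⟪w + (EuclideanSpace.equiv (Fin d) ℝ).symm η, v⟫} =
        {η | b - ⟪w, v⟫ < ⟪WithLp.toLp 2 η, v⟫} := by
    ext η
    simp only [mem_ofPred_eq, inner_add_left, sub_lt_iff_lt_add']
    rfl
  have hwyg : ⟪w, y + g⟫ = ⟪w, y⟫ := by rw [inner_add_right, hwg, add_zero]
  rw [hP, hshift, hshift, pi_gaussianReal_setOf_lt_inner, pi_gaussianReal_setOf_lt_inner, hwyg]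
  refine gaussianReal_sq_Ioi_lt_of_lt_of_neg (sub_neg.2 hwy) (mul_pos hs (nnnorm_pos.2 hyg)) ?_
  exact mul_lt_mul_of_pos_left (by exact_mod_cast hnorm) hs

theorem gap_translation_increases_robustness_offset
    (d : ℕ) (hd : 0 < d) (s : ℝ≥0) (hs : 0 < s)
    (P : Measure (Fin d → ℝ))
    (hP : P = Measure.pi fun _ : Fin d => gaussianReal 0 (s ^ 2))
    (w y g : EuclideanSpace ℝ (Fin d)) (b : ℝ) (hb : 0 ≤ b)
    (hwy : b < ⟪w, y⟫) (hwg : ⟪w, g⟫ = 0)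
    (hyg : y + g ≠ 0) (hnorm : ‖y + g‖ < ‖y‖) :
    P {η : Fin d → ℝ | b < ⟪w + (EuclideanSpace.equiv (Fin d) ℝ).symm η, y⟫}
      < P {η : Fin d → ℝ | b < ⟪w + (EuclideanSpace.equiv (Fin d) ℝ).symm η, y + g⟫} :=
  gap_translation_increases_robustness_offset_general d s hs P hP w y g b hwy hwg hyg hnorm
end

section
/- For all x_1, x_2, y ∈ EuclideanSpace ℝ (Fin d), the two-image one-caption contrastive loss satisfies L(x_1, x_2, y) ≥ 2·log 2, with equality if and only if x_1 = x_2 = y. In particular, the unique global minimizer of the loss has both images coincide with the caption embedding, so no modality gap exists at the minimum. -/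
/-!
STATEMENT 12: The two-image one-caption contrastive loss satisfies
`L(x₁, x₂, y) ≥ 2 log 2`, with equality iff `x₁ = x₂ = y`: the unique global minimizer has
no modality gap.
-/

open RealInnerProductSpace

/-- Squared Euclidean distance `D(u,v) = ‖u − v‖²`. -/
noncomputable def sqDist {d : ℕ} (u v : EuclideanSpace ℝ (Fin d)) : ℝ := ‖u - v‖ ^ 2

/-- Two-image one-caption contrastive loss
`L(x₁, x₂, y) = log 2 + D(x₁,y) + D(x₂,y) + log (exp (−D(x₁,y)) + exp (−D(x₂,y)))`. -/
noncomputable def twoImageLoss {d : ℕ} (x₁ x₂ y : EuclideanSpace ℝ (Fin d)) : ℝ :=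
  Real.log 2 + sqDist x₁ y + sqDist x₂ y +
    Real.log (Real.exp (-sqDist x₁ y) + Real.exp (-sqDist x₂ y))

theorem twoImageLoss_ge_and_eq_iff
    (d : ℕ) (x₁ x₂ y : EuclideanSpace ℝ (Fin d)) :
    2 * Real.log 2 ≤ twoImageLoss x₁ x₂ y ∧
    (twoImageLoss x₁ x₂ y = 2 * Real.log 2 ↔ x₁ = y ∧ x₂ = y) := by
  set a := sqDist x₁ y with ha_def
  set b := sqDist x₂ y with hb_def
  have ha : 0 ≤ a := sq_nonneg _
  have hb : 0 ≤ b := sq_nonneg _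
  have ha0 : a = 0 ↔ x₁ = y := by
    simp [ha_def, sqDist, pow_eq_zero_iff, sub_eq_zero]
  have hb0 : b = 0 ↔ x₂ = y := by
    simp [hb_def, sqDist, pow_eq_zero_iff, sub_eq_zero]
  have hpos : (0 : ℝ) < Real.exp (-a) + Real.exp (-b) := by positivity
  have hpos' : (0 : ℝ) < Real.exp a + Real.exp b := by positivity
  have hprod : Real.exp a + Real.exp b =
      Real.exp (a + b) * (Real.exp (-a) + Real.exp (-b)) := by
    rw [mul_add, ← Real.exp_add, ← Real.exp_add]
    ring_nf
  have hL : twoImageLoss x₁ x₂ y = Real.log 2 + Real.log (Real.exp a + Real.exp b) := by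
    rw [twoImageLoss, hprod, Real.log_mul (Real.exp_pos _).ne' hpos.ne', Real.log_exp]
    ring
  have h2 : (2 : ℝ) ≤ Real.exp a + Real.exp b := by
    have := Real.one_le_exp ha
    have := Real.one_le_exp hb
    linarith
  constructor
  · rw [hL, two_mul]
    have := Real.log_le_log (by norm_num : (0:ℝ) < 2) h2
    linarith
  · rw [hL, two_mul, ← ha0, ← hb0]
    constructor
    · intro h
      have hlog : Real.log (Real.exp a + Real.exp b) = Real.log 2 := by linarith
      have : Real.exp a + Real.exp b = 2 := by
        have := congrArg Real.exp hlog
        rwa [Real.exp_log hpos', Real.exp_log (by norm_num)] at this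
      have h1 := Real.one_le_exp ha
      have h1' := Real.one_le_exp hb
      have hea : Real.exp a = 1 := by linarith
      have heb : Real.exp b = 1 := by linarith
      constructor
      · have := Real.exp_log (x := (1:ℝ)) one_pos; nlinarith [Real.log_exp a, congrArg Real.log hea, Real.log_one]
      · nlinarith [Real.log_exp b, congrArg Real.log heb, Real.log_one]
    · rintro ⟨h1, h2⟩
      simp [h1, h2]
      ring_nf
end

section
/- For all x_1, x_2 ∈ EuclideanSpace ℝ (Fin d), the function y ↦ L(x_1, x_2, y) (with x_1, x_2 fixed) is differentiable, and its gradient vanishes at the midpoint: ∇_y L evaluated at y = (x_1 + x_2)/2 equals 0. -/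
/-!
Reflecting `y` through the midpoint, `y ↦ x₁ + x₂ - y`, swaps `D(x₁, y)` and `D(x₂, y)`, so the
loss is invariant under it. A differentiable function invariant under a point reflection has
derivative `f' = -f'` at the centre, hence `f' = 0`.
-/

open RealInnerProductSpace

theorem HasFDerivAt.eq_zero_of_reflection_invariant {𝕜 E F : Type*} [NontriviallyNormedField 𝕜]
    [NormedAddCommGroup E] [NormedSpace 𝕜 E] [NormedAddCommGroup F] [NormedSpace 𝕜 F]
    [IsAddTorsionFree F] {f : E → F} {f' : E →L[𝕜] F} {m : E}
    (hf : ∀ y, f ((2 : 𝕜) • m - y) = f y) (h : HasFDerivAt f f' m) : f' = 0 := by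
  have h' : HasFDerivAt f f' ((2 : 𝕜) • m - m) := by rwa [two_smul, add_sub_cancel_right]
  have hreflect : HasFDerivAt (fun y => (2 : 𝕜) • m - y) (-ContinuousLinearMap.id 𝕜 E) m :=
    (hasFDerivAt_id m).const_sub _
  have hcomp : HasFDerivAt (fun y => f ((2 : 𝕜) • m - y)) (-f') m :=
    (h'.comp m hreflect).congr_fderiv (by simp)
  have hneg : f' = -f' := h.unique (by simpa only [hf] using hcomp)
  ext v
  exact self_eq_neg.mp (congrArg (· v) hneg)

section

variable {d : ℕ} (x₁ x₂ : EuclideanSpace ℝ (Fin d))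

theorem sqDist_reflect (y : EuclideanSpace ℝ (Fin d)) :
    sqDist x₁ (x₁ + x₂ - y) = sqDist x₂ y := by
  have h : x₁ - (x₁ + x₂ - y) = -(x₂ - y) := by abel
  rw [sqDist, sqDist, h, norm_neg]

theorem twoImageLoss_reflect (y : EuclideanSpace ℝ (Fin d)) :
    twoImageLoss x₁ x₂ (x₁ + x₂ - y) = twoImageLoss x₁ x₂ y := by
  have h₂ : sqDist x₂ (x₁ + x₂ - y) = sqDist x₁ y := by rw [add_comm, sqDist_reflect]
  rw [twoImageLoss, twoImageLoss, sqDist_reflect, h₂, add_comm (Real.exp _)]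
  ring

theorem differentiable_sqDist (u : EuclideanSpace ℝ (Fin d)) :
    Differentiable ℝ (sqDist u) :=
  ((differentiable_const u).sub differentiable_id).norm_sq ℝ

theorem differentiable_twoImageLoss : Differentiable ℝ (twoImageLoss x₁ x₂) := by
  have hexp (u : EuclideanSpace ℝ (Fin d)) : Differentiable ℝ fun y => Real.exp (-sqDist u y) :=
    (differentiable_sqDist u).neg.exp
  exact (((differentiable_const _).add (differentiable_sqDist x₁)).add
    (differentiable_sqDist x₂)).add <|
    ((hexp x₁).add (hexp x₂)).log fun _ => (add_pos (Real.exp_pos _) (Real.exp_pos _)).ne'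

end

theorem twoImageLoss_gradient_vanishes_at_midpoint
    (d : ℕ) (x₁ x₂ : EuclideanSpace ℝ (Fin d)) :
    HasGradientAt (fun z => twoImageLoss x₁ x₂ z) 0 ((2 : ℝ)⁻¹ • (x₁ + x₂)) := by
  have hL := (differentiable_twoImageLoss x₁ x₂ ((2 : ℝ)⁻¹ • (x₁ + x₂))).hasFDerivAt
  have hinv (y : EuclideanSpace ℝ (Fin d)) :
      twoImageLoss x₁ x₂ ((2 : ℝ) • (2 : ℝ)⁻¹ • (x₁ + x₂) - y) = twoImageLoss x₁ x₂ y := by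
    rw [smul_inv_smul₀ two_ne_zero, twoImageLoss_reflect]
  rw [hasGradientAt_iff_hasFDerivAt, map_zero, ← hL.eq_zero_of_reflection_invariant hinv]
  exact hL
end
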